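/- Let φ : ℝ^d → ℝ satisfy φ(v') + φ(v'⋆) = φ(v) + φ(v⋆) for all v, v⋆ ∈ ℝ^d and all σ ∈ S^{d-1} (with v', v'⋆ the post-collisional velocities). If φ is continuous, then φ(v) = a + b·v + c|v|² for some constants a, c ∈ ℝ, b ∈ ℝ^d. -/

import Mathlib

/-!
Subtracting `φ 0`, a collision invariant becomes orthogonally additive: the collision of `x + y`
with `0` can scatter into the orthogonal pair `x`, `y`. Its odd part is moreover additive, because
a collision in a direction orthogonal to the mean velocity (which exists once `d ≥ 2`) yields
Jensen's equation; being continuous, it is a linear functional `⟪b, ·⟫`. Its even part depends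
only on `‖v‖`, so it is `g (‖v‖ ^ 2)` with `g` continuous and additive on `[0, ∞)`, hence linear.
-/

open scoped RealInnerProductSpace

theorem map_eq_mul_map_one_of_map_add_of_nonneg {g : ℝ → ℝ} (hg : Continuous g)
    (hadd : ∀ s t, 0 ≤ s → 0 ≤ t → g (s + t) = g s + g t) {t : ℝ} (ht : 0 ≤ t) :
    g t = t * g 1 := by
  -- extend `g` oddly to an additive function on all of `ℝ`
  let F : ℝ → ℝ := fun t ↦ g (max t 0) - g (max (-t) 0)
  have hF_nonneg : ∀ t, 0 ≤ t → F t = g t := fun t ht ↦ by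
    have hg0 : g 0 = 0 := by simpa using hadd 0 0 le_rfl le_rfl
    simp [F, max_eq_left ht, max_eq_right (neg_nonpos.2 ht), hg0]
  have hF_add : ∀ s t, F (s + t) = F s + F t := fun s t ↦ by
    have hpos : ∀ a : ℝ, 0 ≤ max a 0 := fun a ↦ le_max_right a 0
    have hsplit : ∀ a : ℝ, max a 0 - max (-a) 0 = a := max_zero_sub_max_neg_zero_eq_self
    have key : max (s + t) 0 + (max (-s) 0 + max (-t) 0)
        = max (-(s + t)) 0 + (max s 0 + max t 0) := by
      linarith [hsplit (s + t), hsplit s, hsplit t]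
    have h := congrArg g key
    rw [hadd _ _ (hpos _) (add_nonneg (hpos _) (hpos _)), hadd _ _ (hpos _) (hpos _),
      hadd _ _ (hpos _) (add_nonneg (hpos _) (hpos _)), hadd _ _ (hpos _) (hpos _)] at h
    simp only [F]
    linarith
  have hF_cont : Continuous F := by fun_prop
  have := map_real_smul (AddMonoidHom.mk' F hF_add) hF_cont t 1
  simp only [AddMonoidHom.mk'_apply, smul_eq_mul, mul_one] at this
  rw [← hF_nonneg t ht, ← hF_nonneg 1 zero_le_one, this]

variable {E : Type*} [NormedAddCommGroup E] [InnerProductSpace ℝ E]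

theorem exists_norm_eq_one_inner_eq_zero (hE : 1 < Module.rank ℝ E) (x : E) :
    ∃ σ : E, ‖σ‖ = 1 ∧ ⟪x, σ⟫ = 0 := by
  have hperp : (ℝ ∙ x)ᗮ ≠ ⊥ := by
    rw [Ne, Submodule.orthogonal_eq_bot_iff]
    intro htop
    have := rank_span_le (R := ℝ) ({x} : Set E)
    rw [htop, rank_top, Cardinal.mk_singleton] at this
    exact hE.not_ge this
  obtain ⟨y, hy, hy0⟩ := Submodule.exists_mem_ne_zero_of_ne_bot hperp
  refine ⟨‖y‖⁻¹ • y, norm_smul_inv_norm hy0, ?_⟩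
  rw [inner_smul_right, Submodule.mem_orthogonal_singleton_iff_inner_right.mp hy, mul_zero]

theorem exists_inner_eq_of_map_add [CompleteSpace E] {f : E → ℝ} (hf : Continuous f)
    (hadd : ∀ u v, f (u + v) = f u + f v) : ∃ b : E, ∀ v, f v = ⟪b, v⟫ := by
  let L : E →L[ℝ] ℝ := (AddMonoidHom.mk' f hadd).toRealLinearMap hf
  exact ⟨(InnerProductSpace.toDual ℝ E).symm L, fun v ↦ by
    rw [InnerProductSpace.toDual_symm_apply]; rfl⟩

section OrthogonallyAdditive

variable {f : E → ℝ}

theorem map_eq_of_norm_eq_of_even (hf : ∀ x y : E, ⟪x, y⟫ = 0 → f (x + y) = f x + f y)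
    (heven : ∀ x, f (-x) = f x) {u w : E} (huw : ‖u‖ = ‖w‖) :
    f u = f w := by
  -- `u` and `w` are the diagonals of the rhombus spanned by their half-sum and half-difference
  set x : E := (2 : ℝ)⁻¹ • (u + w)
  set y : E := (2 : ℝ)⁻¹ • (u - w)
  have hxy : ⟪x, y⟫ = 0 := by
    simp only [x, y, inner_smul_left, inner_smul_right, inner_add_left, inner_sub_right,
      real_inner_self_eq_norm_sq, real_inner_comm u w, huw]
    ring
  have hu : u = x + y := by module
  have hw : w = x + -y := by module
  rw [hu, hw, hf x y hxy, hf x (-y) (by rw [inner_neg_right, hxy, neg_zero]), heven]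

theorem exists_eq_mul_norm_sq_of_even (hf : ∀ x y : E, ⟪x, y⟫ = 0 → f (x + y) = f x + f y)
    (hE : 1 < Module.rank ℝ E) (hcont : Continuous f)
    (heven : ∀ x, f (-x) = f x) : ∃ c : ℝ, ∀ x, f x = c * ‖x‖ ^ 2 := by
  obtain ⟨e, he, -⟩ := exists_norm_eq_one_inner_eq_zero hE 0
  obtain ⟨σ, hσ, heσ⟩ := exists_norm_eq_one_inner_eq_zero hE e
  let g : ℝ → ℝ := fun s ↦ f (√s • e)
  have hfg : ∀ x, f x = g (‖x‖ ^ 2) := fun x ↦ map_eq_of_norm_eq_of_even hf heven <| by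
    rw [norm_smul, he, mul_one, Real.norm_of_nonneg (Real.sqrt_nonneg _),
      Real.sqrt_sq (norm_nonneg x)]
  have hg_add : ∀ s t, 0 ≤ s → 0 ≤ t → g (s + t) = g s + g t := fun s t hs ht ↦ by
    have hx : ‖√s • e‖ ^ 2 = s := by
      rw [norm_smul, he, mul_one, Real.norm_of_nonneg (Real.sqrt_nonneg _), Real.sq_sqrt hs]
    have hy : ‖√t • σ‖ ^ 2 = t := by
      rw [norm_smul, hσ, mul_one, Real.norm_of_nonneg (Real.sqrt_nonneg _), Real.sq_sqrt ht]
    have horth : ⟪√s • e, √t • σ⟫ = 0 := by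
      rw [inner_smul_left, inner_smul_right, heσ, mul_zero, mul_zero]
    calc g (s + t) = g (‖√s • e + √t • σ‖ ^ 2) := by
          rw [norm_add_sq_real, horth, hx, hy, mul_zero, add_zero]
      _ = g s + g t := by rw [← hfg, hf _ _ horth, hfg, hfg, hx, hy]
  have hg_cont : Continuous g := by fun_prop
  exact ⟨g 1, fun x ↦ by
    rw [hfg, map_eq_mul_map_one_of_map_add_of_nonneg hg_cont hg_add (sq_nonneg _), mul_comm]⟩

end OrthogonallyAdditive

def IsCollisionInvariant (φ : E → ℝ) : Prop :=
  ∀ v vs σ : E, ‖σ‖ = 1 →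
    φ ((2 : ℝ)⁻¹ • (v + vs) + (2 : ℝ)⁻¹ • (‖v - vs‖ • σ)) +
      φ ((2 : ℝ)⁻¹ • (v + vs) - (2 : ℝ)⁻¹ • (‖v - vs‖ • σ)) = φ v + φ vs

namespace IsCollisionInvariant

variable {φ ψ : E → ℝ}

protected theorem add (hφ : IsCollisionInvariant φ) (hψ : IsCollisionInvariant ψ) :
    IsCollisionInvariant (φ + ψ) := fun v vs σ hσ ↦ by
  simp only [Pi.add_apply]
  linarith [hφ v vs σ hσ, hψ v vs σ hσ]

protected theorem sub (hφ : IsCollisionInvariant φ) (hψ : IsCollisionInvariant ψ) :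
    IsCollisionInvariant (φ - ψ) := fun v vs σ hσ ↦ by
  simp only [Pi.sub_apply]
  linarith [hφ v vs σ hσ, hψ v vs σ hσ]

theorem sub_const (hφ : IsCollisionInvariant φ) (c : ℝ) :
    IsCollisionInvariant (fun v ↦ φ v - c) := fun v vs σ hσ ↦ by
  linarith [hφ v vs σ hσ]

theorem comp_neg (hφ : IsCollisionInvariant φ) : IsCollisionInvariant (fun v ↦ φ (-v)) :=
  fun v vs σ hσ ↦ by
  have h := hφ (-v) (-vs) σ hσ
  rw [show -v - -vs = -(v - vs) by abel, norm_neg] at h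
  dsimp only
  rw [← h, add_comm (φ _)]
  congr 2 <;> module

theorem map_add_of_inner_eq_zero (hφ : IsCollisionInvariant φ) (h0 : φ 0 = 0) {x y : E}
    (hxy : ⟪x, y⟫ = 0) : φ (x + y) = φ x + φ y := by
  rcases eq_or_ne x y with rfl | hne
  · obtain rfl : x = 0 := inner_self_eq_zero.mp hxy
    simp [h0]
  have hn : ‖x - y‖ ≠ 0 := norm_ne_zero_iff.mpr (sub_ne_zero.mpr hne)
  have h := hφ (x + y) 0 (‖x - y‖⁻¹ • (x - y)) (norm_smul_inv_norm (sub_ne_zero.mpr hne))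
  have hnorm : ‖x + y - 0‖ = ‖x - y‖ := by
    rw [sub_zero, ← sq_eq_sq₀ (norm_nonneg _) (norm_nonneg _), norm_add_sq_real,
      norm_sub_sq_real, hxy]
    ring
  rw [hnorm, smul_inv_smul₀ hn, h0] at h
  simp only [add_zero] at h
  rw [← h]
  congr 2 <;> module

theorem map_add_of_odd (hE : 1 < Module.rank ℝ E) (hφ : IsCollisionInvariant φ)
    (hodd : ∀ x, φ (-x) = -φ x) (u v : E) : φ (u + v) = φ u + φ v := by
  have h0 : φ 0 = 0 := by
    have h := hodd 0
    rw [neg_zero] at h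
    linarith
  have hjensen : ∀ u v : E, φ u + φ v = 2 * φ ((2 : ℝ)⁻¹ • (u + v)) := fun u v ↦ by
    obtain ⟨σ, hσ, hmσ⟩ := exists_norm_eq_one_inner_eq_zero hE ((2 : ℝ)⁻¹ • (u + v))
    have horth : ⟪(2 : ℝ)⁻¹ • (u + v), (2 : ℝ)⁻¹ • (‖u - v‖ • σ)⟫ = 0 := by
      rw [inner_smul_right, inner_smul_right, hmσ, mul_zero, mul_zero]
    have hplus := hφ.map_add_of_inner_eq_zero h0 horth
    have hminus := hφ.map_add_of_inner_eq_zero h0 (by rwa [inner_neg_right, neg_eq_zero])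
    rw [← sub_eq_add_neg, hodd] at hminus
    linarith [hφ u v σ hσ]
  calc φ (u + v) = φ (u + v) + φ 0 := by rw [h0, add_zero]
    _ = 2 * φ ((2 : ℝ)⁻¹ • (u + v + 0)) := hjensen _ _
    _ = φ u + φ v := by rw [add_zero, hjensen]

theorem exists_eq_add_inner_add_mul_norm_sq [CompleteSpace E]
    (hE : 1 < Module.rank ℝ E) (hφ : IsCollisionInvariant φ) (hcont : Continuous φ) :
    ∃ (a c : ℝ) (b : E), ∀ v, φ v = a + ⟪b, v⟫ + c * ‖v‖ ^ 2 := by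
  let ψ : E → ℝ := fun v ↦ φ v - φ 0
  have hψ : IsCollisionInvariant ψ := hφ.sub_const (φ 0)
  have hψ0 : ψ 0 = 0 := sub_self _
  obtain ⟨b, hb⟩ := exists_inner_eq_of_map_add (f := ψ - fun v ↦ ψ (-v)) (by fun_prop)
    ((hψ.sub hψ.comp_neg).map_add_of_odd hE fun x ↦ by simp only [Pi.sub_apply, neg_neg, neg_sub])
  obtain ⟨c, hc⟩ := exists_eq_mul_norm_sq_of_even (f := ψ + fun v ↦ ψ (-v))
    (fun x y ↦ (hψ.add hψ.comp_neg).map_add_of_inner_eq_zero (by simp [hψ0])) hE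
    (by fun_prop) fun x ↦ by simp only [Pi.add_apply, neg_neg, add_comm]
  refine ⟨φ 0, c / 2, (2 : ℝ)⁻¹ • b, fun v ↦ ?_⟩
  have hodd := hb v
  have heven := hc v
  simp only [Pi.sub_apply, Pi.add_apply, ψ] at hodd heven
  rw [real_inner_smul_left]
  linarith

end IsCollisionInvariant

theorem collision_invariants_classification
    (d : ℕ) (hd : 2 ≤ d)
    (φ : EuclideanSpace ℝ (Fin d) → ℝ) (hφ : Continuous φ)
    (hinv : ∀ (v vs σ : EuclideanSpace ℝ (Fin d)), ‖σ‖ = 1 →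
      φ ((2 : ℝ)⁻¹ • (v + vs) + (2 : ℝ)⁻¹ • (‖v - vs‖ • σ)) +
        φ ((2 : ℝ)⁻¹ • (v + vs) - (2 : ℝ)⁻¹ • (‖v - vs‖ • σ))
      = φ v + φ vs) :
    ∃ (a c : ℝ) (b : EuclideanSpace ℝ (Fin d)),
      ∀ v, φ v = a + ⟪b, v⟫ + c * ‖v‖ ^ 2 := by
  have hE : 1 < Module.rank ℝ (EuclideanSpace ℝ (Fin d)) := by
    rw [← Module.finrank_eq_rank, finrank_euclideanSpace_fin]
    exact_mod_cast hd
  exact IsCollisionInvariant.exists_eq_add_inner_add_mul_norm_sq hE hinv hφ
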